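/- arXiv:1206.4040 — 5 statements merged into one kernel-verified Lean document; each statement's English description precedes it below -/
import Mathlib

section
/- Let n ≥ 2. For k = 1, …, n−1 let E_k = diag(0, …, 0, i, −i, 0, …, 0) ∈ M_n(ℂ) (with i in position k and −i in position k+1) and M_k = [[E_k, 0],[0, E_k]] ∈ M_{2n}(ℂ). Then each M_k ∈ m, [M_j, M_k] = 0 for all j, k, the real span a of {M_1, …, M_{n−1}} has real dimension n−1, and a is a Cartan subspace of m: the set {X ∈ m : [X, M_k] = 0 for k = 1, …, n−1} is exactly a. In particular m has rank n−1. -/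
open Matrix Complex

noncomputable section

/-- entrywise complex conjugation of a matrix -/
def mconj {k l : Type*} (M : Matrix k l ℂ) : Matrix k l ℂ := M.map (starRingEnd ℂ)

/-- the standard symplectic structure matrix J = [[0, Iₙ],[−Iₙ, 0]] -/
def Jmat (n : ℕ) : Matrix (Fin n ⊕ Fin n) (Fin n ⊕ Fin n) ℂ := fromBlocks 0 1 (-1) 0

/-- membership in m = {X ∈ su(2n) : σ(X) = −X} -/
def inM (n : ℕ) (X : Matrix (Fin n ⊕ Fin n) (Fin n ⊕ Fin n) ℂ) : Prop :=
  Xᴴ = -X ∧ X.trace = 0 ∧ Jmat n * mconj X * (Jmat n)⁻¹ = -X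

/-- Eₖ = diag(0,…,0, i, −i, 0,…,0) with i in position k and −i in position k+1 -/
def Ek (n : ℕ) (k : Fin (n - 1)) : Matrix (Fin n) (Fin n) ℂ :=
  diagonal (fun j => if (j : ℕ) = (k : ℕ) then I
    else if (j : ℕ) = (k : ℕ) + 1 then -I else 0)

/-- Mₖ = [[Eₖ, 0],[0, Eₖ]] -/
def Mk (n : ℕ) (k : Fin (n - 1)) : Matrix (Fin n ⊕ Fin n) (Fin n ⊕ Fin n) ℂ :=
  fromBlocks (Ek n k) 0 0 (Ek n k)

/-! ### auxiliary lemmas -/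

def dval (n : ℕ) (k : Fin (n-1)) (p : Fin n) : ℂ :=
  if (p:ℕ) = (k:ℕ) then I else if (p:ℕ) = (k:ℕ)+1 then -I else 0

lemma Ek_eq (n : ℕ) (k : Fin (n-1)) : Ek n k = diagonal (dval n k) := rfl

lemma Mk_diag (n : ℕ) (k : Fin (n-1)) :
    Mk n k = diagonal (Sum.elim (dval n k) (dval n k)) := by
  ext i j
  cases i <;> cases j <;>
    simp [Mk, Ek_eq, fromBlocks, Matrix.diagonal, Sum.elim]

lemma Jinv (n : ℕ) : (Jmat n)⁻¹ = -Jmat n := by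
  apply Matrix.inv_eq_right_inv
  have : -Jmat n = fromBlocks 0 (-1) 1 0 := by
    simp [Jmat, Matrix.fromBlocks_neg]
  rw [this, Jmat, fromBlocks_multiply]
  simp [← fromBlocks_one]

lemma sigma_eq (n : ℕ) (X : Matrix (Fin n ⊕ Fin n) (Fin n ⊕ Fin n) ℂ) :
    Jmat n * mconj X * (Jmat n)⁻¹ =
      fromBlocks (mconj X.toBlocks₂₂) (-(mconj X.toBlocks₂₁))
        (-(mconj X.toBlocks₁₂)) (mconj X.toBlocks₁₁) := by
  have hX : mconj X = fromBlocks (mconj X.toBlocks₁₁) (mconj X.toBlocks₁₂)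
      (mconj X.toBlocks₂₁) (mconj X.toBlocks₂₂) := by
    ext (i|i) (j|j) <;> rfl
  have hnJ : -Jmat n = fromBlocks 0 (-1) 1 0 := by
    simp [Jmat, Matrix.fromBlocks_neg]
  rw [Jinv, hX, hnJ, Jmat, fromBlocks_multiply, fromBlocks_multiply]
  simp
lemma dval_split (n : ℕ) (k : Fin (n-1)) (p : Fin n) :
    dval n k p = (if (p:ℕ) = (k:ℕ) then I else 0)
      + (if (p:ℕ) = (k:ℕ)+1 then -I else 0) := by
  unfold dval
  by_cases h1 : (p:ℕ) = (k:ℕ) <;> by_cases h2 : (p:ℕ) = (k:ℕ)+1 <;>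
    simp [h1, h2] <;> omega

lemma sum_dval (n : ℕ) (c : Fin (n-1) → ℝ) (p : Fin n) :
    ∑ k : Fin (n-1), (c k : ℂ) * dval n k p =
      (if h : (p:ℕ) < n-1 then (c ⟨(p:ℕ), h⟩ : ℂ) else 0) * I
      + (if h : 1 ≤ (p:ℕ) ∧ (p:ℕ)-1 < n-1 then (c ⟨(p:ℕ)-1, h.2⟩ : ℂ) else 0) * (-I) := by
  simp_rw [dval_split, mul_add, Finset.sum_add_distrib]
  congr 1
  · by_cases h : (p:ℕ) < n-1
    · rw [dif_pos h, Finset.sum_eq_single (⟨(p:ℕ), h⟩ : Fin (n-1))]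
      · simp
      · intro k _ hk
        rw [if_neg, mul_zero]
        intro hc; exact hk (by apply Fin.ext; simpa using hc.symm)
      · simp
    · rw [dif_neg h, zero_mul]
      apply Finset.sum_eq_zero
      intro k _
      rw [if_neg, mul_zero]
      intro hc; exact h (hc ▸ k.isLt)
  · by_cases h : 1 ≤ (p:ℕ) ∧ (p:ℕ)-1 < n-1
    · rw [dif_pos h, Finset.sum_eq_single (⟨(p:ℕ)-1, h.2⟩ : Fin (n-1))]
      · rw [if_pos (show (p:ℕ) = ((⟨(p:ℕ)-1, h.2⟩ : Fin (n-1)) :ℕ)+1 by simp; omega)]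
      · intro k _ hk
        rw [if_neg, mul_zero]
        intro hc; exact hk (by apply Fin.ext; simp; omega)
      · simp
    · rw [dif_neg h, zero_mul]
      apply Finset.sum_eq_zero
      intro k _
      rw [if_neg, mul_zero]
      intro hc
      exact h ⟨by omega, by have := k.isLt; omega⟩

lemma dval_sum_zero (n : ℕ) (k : Fin (n-1)) : ∑ p : Fin n, dval n k p = 0 := by
  have hk : (k:ℕ) < n - 1 := k.isLt
  simp_rw [dval_split, Finset.sum_add_distrib]
  have h1 : ∑ p : Fin n, (if (p:ℕ) = (k:ℕ) then I else 0) = I := by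
    rw [Finset.sum_eq_single (⟨(k:ℕ), by omega⟩ : Fin n)]
    · simp
    · intro b _ hb; rw [if_neg]; intro hc; exact hb (Fin.ext (by simpa using hc))
    · simp
  have h2 : ∑ p : Fin n, (if (p:ℕ) = (k:ℕ)+1 then -I else 0) = -I := by
    rw [Finset.sum_eq_single (⟨(k:ℕ)+1, by omega⟩ : Fin n)]
    · simp
    · intro b _ hb; rw [if_neg]; intro hc; exact hb (Fin.ext (by simpa using hc))
    · simp
  rw [h1, h2, add_neg_cancel]

def tN (n : ℕ) (t : Fin n → ℝ) : ℕ → ℝ := fun m => if h : m < n then t ⟨m,h⟩ else 0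

def cdef (n : ℕ) (t : Fin n → ℝ) : Fin (n-1) → ℝ :=
  fun k => ∑ j ∈ Finset.range ((k:ℕ)+1), tN n t j

lemma sum_c (n : ℕ) (hn : 2 ≤ n) (t : Fin n → ℝ) (ht : ∑ p, t p = 0) (p : Fin n) :
    ∑ k : Fin (n-1), (cdef n t k : ℂ) * dval n k p = (t p : ℂ) * I := by
  rw [sum_dval]
  have hT0 : ∑ j ∈ Finset.range n, tN n t j = 0 := by
    rw [← ht, ← Fin.sum_univ_eq_sum_range]
    apply Finset.sum_congr rfl
    intro i _; simp [tN]
  have hp : (p:ℕ) < n := p.isLt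
  by_cases h0 : (p:ℕ) = 0
  · rw [dif_pos (show (p:ℕ) < n-1 by omega), dif_neg (by omega)]
    have e : cdef n t ⟨(p:ℕ), by omega⟩ = t p := by
      have h' : (⟨(p:ℕ), by omega⟩ : Fin (n-1)) = ⟨0, by omega⟩ := Fin.ext h0
      rw [h']
      unfold cdef
      rw [Finset.sum_range_one]
      unfold tN
      rw [dif_pos (show 0 < n by omega)]
      congr 1
      exact Fin.ext h0.symm
    rw [e]; ring
  · by_cases h1 : (p:ℕ) < n-1
    · rw [dif_pos h1, dif_pos (show 1 ≤ (p:ℕ) ∧ (p:ℕ)-1 < n-1 by omega)]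
      have e1 : cdef n t ⟨(p:ℕ), h1⟩
          = cdef n t ⟨(p:ℕ)-1, by omega⟩ + t p := by
        unfold cdef
        show ∑ j ∈ Finset.range ((p:ℕ)+1), tN n t j
          = ∑ j ∈ Finset.range (((p:ℕ)-1)+1), tN n t j + t p
        rw [show Finset.range (((p:ℕ)-1)+1) = Finset.range (p:ℕ) by congr 1; omega,
          Finset.sum_range_succ]
        congr 1
        unfold tN
        rw [dif_pos hp]
      rw [e1]; push_cast; ring
    · rw [dif_neg h1, dif_pos (show 1 ≤ (p:ℕ) ∧ (p:ℕ)-1 < n-1 by omega)]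
      have hpn : (p:ℕ) = n-1 := by omega
      have e2 : cdef n t ⟨(p:ℕ)-1, by omega⟩ = - t p := by
        unfold cdef
        show ∑ j ∈ Finset.range (((p:ℕ)-1)+1), tN n t j = - t p
        rw [show Finset.range (((p:ℕ)-1)+1) = Finset.range (n-1) by congr 1; omega]
        have := hT0
        rw [show Finset.range n = Finset.range ((n-1)+1) by congr 1; omega,
          Finset.sum_range_succ] at this
        have etn : tN n t (n-1) = t p := by
          unfold tN
          rw [dif_pos (show n-1 < n by omega)]
          congr 1
          exact Fin.ext (show n-1 = (p:ℕ) by omega)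
        rw [etn] at this
        linarith
      rw [e2]; push_cast; ring

lemma sum_dval_nat (n : ℕ) (c : Fin (n-1) → ℝ) (m : ℕ) (hm : m < n) :
    ∑ k : Fin (n-1), (c k : ℂ) * dval n k ⟨m, hm⟩ =
      (if h : m < n-1 then (c ⟨m, h⟩ : ℂ) else 0) * I
      + (if h : 1 ≤ m ∧ m-1 < n-1 then (c ⟨m-1, h.2⟩ : ℂ) else 0) * (-I) :=
  sum_dval n c ⟨m, hm⟩

lemma mconj_zero {k l : Type*} : mconj (0 : Matrix k l ℂ) = 0 := by
  ext i j; simp [mconj]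

lemma mconj_add {k l : Type*} (A B : Matrix k l ℂ) :
    mconj (A + B) = mconj A + mconj B := by
  ext i j; simp [mconj]

lemma mconj_smul {k l : Type*} (r : ℝ) (A : Matrix k l ℂ) :
    mconj (r • A) = r • mconj A := by
  ext i j
  simp [mconj, Complex.real_smul]

lemma dval_star (n : ℕ) (k : Fin (n-1)) (p : Fin n) :
    star (dval n k p) = -dval n k p := by
  unfold dval; split_ifs <;> simp

lemma Ek_mconj (n : ℕ) (k : Fin (n-1)) : mconj (Ek n k) = -(Ek n k) := by
  ext i j
  rcases eq_or_ne i j with rfl | hne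
  · simp only [mconj, Matrix.map_apply, Ek_eq, Matrix.diagonal_apply_eq,
      Matrix.neg_apply]
    exact dval_star n k i
  · simp [mconj, Matrix.map_apply, Ek_eq, Matrix.diagonal_apply_ne _ hne]

lemma MkH (n : ℕ) (k : Fin (n-1)) : (Mk n k)ᴴ = -(Mk n k) := by
  rw [Mk_diag, diagonal_conjTranspose]
  ext i j
  rcases eq_or_ne i j with rfl | hne
  · simp only [Matrix.diagonal_apply_eq, Matrix.neg_apply, Pi.star_apply]
    cases i <;> simp [dval_star]
  · simp [Matrix.diagonal_apply_ne _ hne]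

lemma Mk_trace (n : ℕ) (k : Fin (n-1)) : (Mk n k).trace = 0 := by
  rw [Mk_diag, trace_diagonal, Fintype.sum_sum_type]
  simp [dval_sum_zero]

lemma Mk_sigma (n : ℕ) (k : Fin (n-1)) :
    Jmat n * mconj (Mk n k) * (Jmat n)⁻¹ = -(Mk n k) := by
  rw [sigma_eq]
  have h11 : (Mk n k).toBlocks₁₁ = Ek n k := rfl
  have h12 : (Mk n k).toBlocks₁₂ = 0 := rfl
  have h21 : (Mk n k).toBlocks₂₁ = 0 := rfl
  have h22 : (Mk n k).toBlocks₂₂ = Ek n k := rfl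
  rw [h11, h12, h21, h22, mconj_zero, Ek_mconj, Mk, Matrix.fromBlocks_neg]

lemma Mk_inM (n : ℕ) (k : Fin (n-1)) : inM n (Mk n k) :=
  ⟨MkH n k, Mk_trace n k, Mk_sigma n k⟩

lemma Mk_comm (n : ℕ) (j k : Fin (n-1)) : Mk n j * Mk n k = Mk n k * Mk n j := by
  rw [Mk_diag n j, Mk_diag n k, diagonal_mul_diagonal, diagonal_mul_diagonal]
  exact congrArg diagonal (funext fun i => mul_comm _ _)

lemma sum_smul_Mk_apply (n : ℕ) (c : Fin (n-1) → ℝ) (i j : Fin n ⊕ Fin n) :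
    (∑ k, c k • Mk n k) i j
      = if i = j then ∑ k, (c k : ℂ) * dval n k (Sum.elim id id i) else 0 := by
  rw [Matrix.sum_apply]
  by_cases h : i = j
  · subst h
    rw [if_pos rfl]
    apply Finset.sum_congr rfl
    intro k _
    rw [Matrix.smul_apply, Mk_diag, diagonal_apply_eq, Complex.real_smul]
    cases i <;> rfl
  · rw [if_neg h]
    apply Finset.sum_eq_zero
    intro k _
    rw [Matrix.smul_apply, Mk_diag, diagonal_apply_ne _ h, smul_zero]

lemma Mk_linIndep (n : ℕ) (hn : 2 ≤ n) : LinearIndependent ℝ (Mk n) := by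
  rw [Fintype.linearIndependent_iff]
  intro g hg
  have key : ∀ (m : ℕ) (hm : m < n),
      ∑ k, (g k : ℂ) * dval n k ⟨m, hm⟩ = 0 := by
    intro m hm
    have := congrFun (congrFun hg (Sum.inl ⟨m, hm⟩)) (Sum.inl ⟨m, hm⟩)
    rw [sum_smul_Mk_apply, if_pos rfl] at this
    simpa using this
  suffices h : ∀ (m : ℕ) (hm : m < n-1), g ⟨m, hm⟩ = 0 by
    intro k
    have := h k k.isLt
    simpa using this
  intro m
  induction m using Nat.strong_induction_on with
  | _ m IH =>
    intro hm
    have hmn : m < n := by omega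
    have hthis := key m hmn
    rw [sum_dval_nat, dif_pos hm] at hthis
    by_cases h0 : m = 0
    · subst h0
      rw [dif_neg (by omega)] at hthis
      simpa [mul_eq_zero, Complex.I_ne_zero] using hthis
    · rw [dif_pos (show 1 ≤ m ∧ m-1 < n-1 by omega)] at hthis
      have hIH : g ⟨m-1, by omega⟩ = 0 := IH (m-1) (by omega) (by omega)
      rw [hIH] at hthis
      simpa [mul_eq_zero, Complex.I_ne_zero] using hthis

def cenM (n : ℕ) : Submodule ℝ (Matrix (Fin n ⊕ Fin n) (Fin n ⊕ Fin n) ℂ) where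
  carrier := {X | inM n X ∧ ∀ k, X * Mk n k = Mk n k * X}
  zero_mem' := by
    refine ⟨⟨by simp, by simp, ?_⟩, fun k => by simp⟩
    rw [mconj_zero]
    simp
  add_mem' := by
    rintro X Y ⟨⟨hX1, hX2, hX3⟩, hX4⟩ ⟨⟨hY1, hY2, hY3⟩, hY4⟩
    refine ⟨⟨?_, ?_, ?_⟩, fun k => ?_⟩
    · rw [conjTranspose_add, hX1, hY1, neg_add]
    · rw [trace_add, hX2, hY2, add_zero]
    · rw [mconj_add, mul_add, add_mul, hX3, hY3, neg_add]
    · rw [add_mul, mul_add, hX4 k, hY4 k]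
  smul_mem' := by
    rintro r X ⟨⟨h1, h2, h3⟩, h4⟩
    refine ⟨⟨?_, ?_, ?_⟩, fun k => ?_⟩
    · rw [conjTranspose_smul, h1, star_trivial, smul_neg]
    · rw [trace_smul, h2, smul_zero]
    · rw [mconj_smul, mul_smul_comm, smul_mul_assoc, h3, smul_neg]
    · rw [smul_mul_assoc, mul_smul_comm, h4 k]

lemma hard (n : ℕ) (hn : 2 ≤ n) (X : Matrix (Fin n ⊕ Fin n) (Fin n ⊕ Fin n) ℂ)
    (hH : Xᴴ = -X) (hTr : X.trace = 0)
    (hσ : Jmat n * mconj X * (Jmat n)⁻¹ = -X)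
    (hc : ∀ k, X * Mk n k = Mk n k * X) :
    X ∈ Submodule.span ℝ (Set.range (Mk n)) := by
  have hH' : ∀ i j, (starRingEnd ℂ) (X j i) = -X i j := by
    intro i j
    have := congrFun (congrFun hH i) j
    simpa [Matrix.conjTranspose_apply, Matrix.neg_apply] using this
  rw [sigma_eq] at hσ
  have hDD : ∀ p q, (starRingEnd ℂ) (X (.inr p) (.inr q)) = -X (.inl p) (.inl q) := by
    intro p q
    have := congrFun (congrFun hσ (Sum.inl p)) (Sum.inl q)
    simpa [Matrix.fromBlocks_apply₁₁, mconj, Matrix.map_apply, Matrix.toBlocks₂₂,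
      Matrix.neg_apply] using this
  have hCB : ∀ p q, (starRingEnd ℂ) (X (.inr p) (.inl q)) = X (.inl p) (.inr q) := by
    intro p q
    have := congrFun (congrFun hσ (Sum.inl p)) (Sum.inr q)
    simp only [Matrix.fromBlocks_apply₁₂, Matrix.neg_apply, mconj, Matrix.map_apply,
      Matrix.toBlocks₂₁, Matrix.of_apply] at this
    exact neg_injective this
  have hcc : ∀ (k : Fin (n-1)) (i j), X i j * Sum.elim (dval n k) (dval n k) j
      = Sum.elim (dval n k) (dval n k) i * X i j := by
    intro k i j
    have h := hc k
    rw [Mk_diag] at h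
    have := congrFun (congrFun h i) j
    rwa [Matrix.mul_diagonal, Matrix.diagonal_mul] at this
  have hIneI : (I : ℂ) ≠ -I := by
    intro h
    have := congrArg Complex.im h
    simp at this
    norm_num at this
  have hsep : ∀ p q : Fin n, p ≠ q → ∃ k : Fin (n-1), dval n k p ≠ dval n k q := by
    intro p q hpq
    by_cases hp : (p:ℕ) < n-1
    · refine ⟨⟨(p:ℕ), hp⟩, ?_⟩
      have hdp : dval n ⟨(p:ℕ), hp⟩ p = I := by
        unfold dval; rw [if_pos rfl]
      rw [hdp]; unfold dval
      split_ifs with h1 h2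
      · exact absurd (Fin.ext h1 : q = p).symm hpq
      · exact hIneI
      · exact I_ne_zero
    · have hpn : (p:ℕ) = n-1 := by have := p.isLt; omega
      refine ⟨⟨n-2, by omega⟩, ?_⟩
      have hdp : dval n ⟨n-2, by omega⟩ p = -I := by
        unfold dval
        rw [if_neg (show ¬(p:ℕ) = n-2 by omega), if_pos (show (p:ℕ) = n-2+1 by omega)]
      rw [hdp]; unfold dval
      split_ifs with h1 h2
      · exact fun h => hIneI h.symm
      · refine absurd (Fin.ext (show (q:ℕ) = (p:ℕ) from ?_) : q = p).symm hpq
        have hh : (q:ℕ) = n-2+1 := h2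
        omega
      · exact neg_ne_zero.mpr I_ne_zero
  have hvan : ∀ i j, Sum.elim id id i ≠ Sum.elim id id j → X i j = 0 := by
    intro i j hne
    obtain ⟨k, hk⟩ := hsep _ _ hne
    by_contra hx
    apply hk
    have h := hcc k i j
    have e1 : Sum.elim (dval n k) (dval n k) i
        = dval n k (Sum.elim id id i) := by cases i <;> rfl
    have e2 : Sum.elim (dval n k) (dval n k) j
        = dval n k (Sum.elim id id j) := by cases j <;> rfl
    rw [e1, e2, mul_comm (dval n k (Sum.elim id id i))] at h
    exact (mul_left_cancel₀ hx h).symm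
  have hB0 : ∀ p, X (.inl p) (.inr p) = 0 := by
    intro p
    have h1 := hH' (.inl p) (.inr p)
    have h2 := hCB p p
    have h3 : -X (.inl p) (.inr p) = X (.inl p) (.inr p) := h1.symm.trans h2
    linear_combination -h3 / 2
  have hC0 : ∀ p, X (.inr p) (.inl p) = 0 := by
    intro p
    have h2 := hCB p p
    rw [hB0 p] at h2
    exact (map_eq_zero _).mp h2
  set t : Fin n → ℝ := fun p => (X (.inl p) (.inl p)).im with hts
  have hre : ∀ p, (X (.inl p) (.inl p)).re = 0 := by
    intro p
    have h1 := hH' (.inl p) (.inl p)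
    have h2 := congrArg Complex.re h1
    simp at h2
    linarith
  have hdiag : ∀ p, X (.inl p) (.inl p) = (t p : ℂ) * I := by
    intro p
    apply Complex.ext <;> simp [hre p, hts]
  have hDeq : ∀ p, X (.inr p) (.inr p) = X (.inl p) (.inl p) := by
    intro p
    have h1 := hDD p p
    have h2 := hH' (.inr p) (.inr p)
    exact neg_injective (h2.symm.trans h1)
  have ht : ∑ p, t p = 0 := by
    have h : ∑ p, X (.inl p) (.inl p) = 0 := by
      have h := hTr
      rw [Matrix.trace, Fintype.sum_sum_type] at h
      simp only [Matrix.diag_apply] at h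
      rw [Finset.sum_congr rfl fun p _ => hDeq p] at h
      exact add_self_eq_zero.mp h
    have h2 := congrArg Complex.im h
    rw [Complex.im_sum] at h2
    simpa [hts] using h2
  have hXeq : X = ∑ k, cdef n t k • Mk n k := by
    ext i j
    rw [sum_smul_Mk_apply]
    by_cases hij : i = j
    · subst hij
      rw [if_pos rfl, sum_c n hn t ht]
      cases i with
      | inl p => exact hdiag p
      | inr p => rw [show Sum.elim id id (Sum.inr p) = p from rfl, hDeq p]; exact hdiag p
    · rw [if_neg hij]
      rcases i with p | p <;> rcases j with q | q
      · exact hvan _ _ (fun hpq => hij (congrArg Sum.inl hpq))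
      · by_cases hpq : p = q
        · subst hpq; exact hB0 p
        · exact hvan _ _ hpq
      · by_cases hpq : p = q
        · subst hpq; exact hC0 p
        · exact hvan _ _ hpq
      · exact hvan _ _ (fun hpq => hij (congrArg Sum.inr hpq))
  rw [hXeq]
  exact Submodule.sum_mem _ fun k _ =>
    Submodule.smul_mem _ _ (Submodule.subset_span ⟨k, rfl⟩)

theorem stmt4' (n : ℕ) (hn : 2 ≤ n) :
    (∀ k, inM n (Mk n k)) ∧
    (∀ j k, Mk n j * Mk n k - Mk n k * Mk n j = 0) ∧
    Module.finrank ℝ ↥(Submodule.span ℝ (Set.range (Mk n))) = n - 1 ∧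
    {X : Matrix (Fin n ⊕ Fin n) (Fin n ⊕ Fin n) ℂ |
        inM n X ∧ ∀ k, X * Mk n k = Mk n k * X}
      = (Submodule.span ℝ (Set.range (Mk n)) :
          Set (Matrix (Fin n ⊕ Fin n) (Fin n ⊕ Fin n) ℂ)) := by
  refine ⟨Mk_inM n, fun j k => by rw [Mk_comm n j k, sub_self], ?_, ?_⟩
  · rw [finrank_span_eq_card (Mk_linIndep n hn)]
    simp
  · ext X
    constructor
    · rintro ⟨⟨h1, h2, h3⟩, h4⟩
      exact hard n hn X h1 h2 h3 h4
    · intro hX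
      have hle : Submodule.span ℝ (Set.range (Mk n)) ≤ cenM n := by
        rw [Submodule.span_le]
        rintro Y ⟨k, rfl⟩
        exact ⟨Mk_inM n k, fun k' => Mk_comm n k k'⟩
      exact hle hX

/-- the real span of the matrices M₁,…,M_{n−1} is a Cartan
subspace of m of dimension n−1, so m has rank n−1. -/
theorem stmt4 (n : ℕ) (hn : 2 ≤ n) :
    (∀ k, inM n (Mk n k)) ∧
    (∀ j k, Mk n j * Mk n k - Mk n k * Mk n j = 0) ∧
    Module.finrank ℝ ↥(Submodule.span ℝ (Set.range (Mk n))) = n - 1 ∧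
    {X : Matrix (Fin n ⊕ Fin n) (Fin n ⊕ Fin n) ℂ |
        inM n X ∧ ∀ k, X * Mk n k = Mk n k * X}
      = (Submodule.span ℝ (Set.range (Mk n)) :
          Set (Matrix (Fin n ⊕ Fin n) (Fin n ⊕ Fin n) ℂ)) := by
  exact stmt4' n hn
end
end

section
/- Let n ≥ 2, χ = 8(n−1)n², ρ = χ/n² = 8(n−1), E = χ^{−1/2} diag((n−1)i, −i, …, −i) ∈ M_n(ℂ), and e = [[E, 0],[0, E]]. Then for all row vectors a, b, c, d ∈ ℂ^{n−1}: [e, μ(a,b)] = η(ρ^{−1/2} i a, ρ^{−1/2} i b) and [e, η(c,d)] = μ(ρ^{−1/2} i c, ρ^{−1/2} i d). In particular ad(e) maps m_⊥ into h_⊥ and h_⊥ into m_⊥. -/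
open Matrix Complex

noncomputable section

/-- the index set {1,…,n} split as 1 + (n−1) -/
abbrev Kn (n : ℕ) := Fin 1 ⊕ Fin (n - 1)
abbrev Idx (n : ℕ) := Kn n ⊕ Kn n

/-- A = [[0, a],[−āᵀ, 0]] -/
def Arow (n : ℕ) (a : Fin (n - 1) → ℂ) : Matrix (Kn n) (Kn n) ℂ :=
  fromBlocks 0 (of fun _ j => a j) (of fun i _ => -star (a i)) 0

/-- B = [[0, b],[−bᵀ, 0]] -/
def Brow (n : ℕ) (b : Fin (n - 1) → ℂ) : Matrix (Kn n) (Kn n) ℂ :=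
  fromBlocks 0 (of fun _ j => b j) (of fun i _ => -b i) 0

/-- μ(a,b) = [[A, B],[B̄, −Ā]] ∈ m_⊥ -/
def mu (n : ℕ) (a b : Fin (n - 1) → ℂ) : Matrix (Idx n) (Idx n) ℂ :=
  fromBlocks (Arow n a) (Brow n b) (mconj (Brow n b)) (-(mconj (Arow n a)))

/-- C = [[0, c],[−c̄ᵀ, 0]] -/
def Crow (n : ℕ) (c : Fin (n - 1) → ℂ) : Matrix (Kn n) (Kn n) ℂ :=
  fromBlocks 0 (of fun _ j => c j) (of fun i _ => -star (c i)) 0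

/-- D = [[0, d],[dᵀ, 0]] -/
def Drow (n : ℕ) (d : Fin (n - 1) → ℂ) : Matrix (Kn n) (Kn n) ℂ :=
  fromBlocks 0 (of fun _ j => d j) (of fun i _ => d i) 0

/-- η(c,d) = [[C, D],[−D̄, C̄]] ∈ h_⊥ -/
def eta (n : ℕ) (c d : Fin (n - 1) → ℂ) : Matrix (Idx n) (Idx n) ℂ :=
  fromBlocks (Crow n c) (Drow n d) (-(mconj (Drow n d))) (mconj (Crow n c))

/-- E = χ^{−1/2} diag((n−1)i, −i, …, −i), χ = 8(n−1)n² -/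
def Emat (n : ℕ) : Matrix (Kn n) (Kn n) ℂ :=
  ((Real.sqrt (8 * ((n : ℝ) - 1) * (n : ℝ) ^ 2) : ℂ))⁻¹ •
    diagonal (Sum.elim (fun _ => ((n : ℂ) - 1) * I) (fun _ => -I))

/-- e = [[E, 0],[0, E]] -/
def emat (n : ℕ) : Matrix (Idx n) (Idx n) ℂ := fromBlocks (Emat n) 0 0 (Emat n)

/-- ad(e) interchanges m_⊥ and h_⊥, via
[e, μ(a,b)] = η(ρ^{−1/2} i a, ρ^{−1/2} i b) and
[e, η(c,d)] = μ(ρ^{−1/2} i c, ρ^{−1/2} i d), where ρ = 8(n−1). -/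
theorem stmt7 (n : ℕ) (hn : 2 ≤ n) :
    (∀ a b : Fin (n - 1) → ℂ,
      emat n * mu n a b - mu n a b * emat n
        = eta n (fun j => ((Real.sqrt (8 * ((n : ℝ) - 1)) : ℂ))⁻¹ * I * a j)
                (fun j => ((Real.sqrt (8 * ((n : ℝ) - 1)) : ℂ))⁻¹ * I * b j)) ∧
    (∀ c d : Fin (n - 1) → ℂ,
      emat n * eta n c d - eta n c d * emat n
        = mu n (fun j => ((Real.sqrt (8 * ((n : ℝ) - 1)) : ℂ))⁻¹ * I * c j)
               (fun j => ((Real.sqrt (8 * ((n : ℝ) - 1)) : ℂ))⁻¹ * I * d j)) := by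
  have hn2 : (2:ℝ) ≤ (n:ℝ) := by exact_mod_cast hn
  have h8 : (0:ℝ) ≤ 8 * ((n:ℝ) - 1) := by linarith
  have hr : Real.sqrt (8 * ((n : ℝ) - 1) * (n : ℝ) ^ 2)
      = Real.sqrt (8 * ((n:ℝ) - 1)) * n := by
    rw [Real.sqrt_mul h8, Real.sqrt_sq (by positivity)]
  have hnne : ((n:ℕ) : ℂ) ≠ 0 := by
    exact_mod_cast Nat.cast_ne_zero.mpr (by omega)
  set s : ℂ := ((Real.sqrt (8 * ((n : ℝ) - 1) * (n : ℝ) ^ 2) : ℂ))⁻¹ with hs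
  set t : ℂ := ((Real.sqrt (8 * ((n : ℝ) - 1)) : ℂ))⁻¹ with ht
  have hkey : s * (n : ℂ) = t := by
    rw [hs, ht, hr, Complex.ofReal_mul, mul_inv, mul_assoc,
      Complex.ofReal_natCast, inv_mul_cancel₀ hnne, mul_one]
  have hconjt : (starRingEnd ℂ) t = t := by
    rw [ht, map_inv₀, Complex.conj_ofReal]
  have hemat : emat n = diagonal
      (s • Sum.elim
        (Sum.elim (fun _ : Fin 1 => ((n : ℂ) - 1) * I) (fun _ : Fin (n-1) => -I))
        (Sum.elim (fun _ : Fin 1 => ((n : ℂ) - 1) * I) (fun _ : Fin (n-1) => -I))) := by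
    rw [emat, Emat, ← hs]
    ext i j
    rcases i with (i | i) <;> rcases j with (j | j) <;>
      simp [fromBlocks, Matrix.diagonal_apply, Pi.smul_apply, smul_eq_mul,
        mul_ite, mul_zero]
  constructor
  · intro a b
    ext i j
    rw [Matrix.sub_apply, hemat, diagonal_mul, mul_diagonal]
    rcases i with (i | i) <;> rcases i with (i | i) <;>
      rcases j with (j | j) <;> rcases j with (j | j) <;>
      simp only [mu, _root_.eta, Arow, Brow, Crow, Drow, mconj, fromBlocks,
        Sum.elim_inl, Sum.elim_inr, of_apply, Matrix.map_apply, Matrix.neg_apply,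
        Matrix.zero_apply, Pi.smul_apply, smul_eq_mul, Complex.star_def, _root_.map_mul, _root_.map_neg, Complex.conj_I, Complex.conj_natCast, hconjt] <;>
      (first | (rw [← hkey]; ring1) | ring1 | simp)
  · intro c d
    ext i j
    rw [Matrix.sub_apply, hemat, diagonal_mul, mul_diagonal]
    rcases i with (i | i) <;> rcases i with (i | i) <;>
      rcases j with (j | j) <;> rcases j with (j | j) <;>
      simp only [mu, _root_.eta, Arow, Brow, Crow, Drow, mconj, fromBlocks,
        Sum.elim_inl, Sum.elim_inr, of_apply, Matrix.map_apply, Matrix.neg_apply,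
        Matrix.zero_apply, Pi.smul_apply, smul_eq_mul, Complex.star_def, _root_.map_mul, _root_.map_neg, Complex.conj_I, Complex.conj_natCast, hconjt] <;>
      (first | (rw [← hkey]; ring1) | ring1 | simp)
end
end

section
/- Let n ≥ 2, χ = 8(n−1)n², ρ = 8(n−1), E = χ^{−1/2} diag((n−1)i, −i, …, −i) ∈ M_n(ℂ), and e = [[E, 0],[0, E]]. Then for all row vectors a, b ∈ ℂ^{n−1}: [e, [e, μ(a,b)]] = −(1/ρ) μ(a,b); that is, the linear map ad(e)² acts on the subspace m_⊥ as −1/ρ times the identity. -/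
open Matrix Complex

noncomputable section

/-- the bracket ad(e) X = [e, X] -/
def adE (n : ℕ) (X : Matrix (Idx n) (Idx n) ℂ) : Matrix (Idx n) (Idx n) ℂ :=
  emat n * X - X * emat n

/-- the diagonal entries of e -/
def dfun (n : ℕ) : Idx n → ℂ :=
  Sum.elim
    (Sum.elim (fun _ => ((Real.sqrt (8 * ((n : ℝ) - 1) * (n : ℝ) ^ 2) : ℂ))⁻¹ * (((n : ℂ) - 1) * I))
      (fun _ => ((Real.sqrt (8 * ((n : ℝ) - 1) * (n : ℝ) ^ 2) : ℂ))⁻¹ * (-I)))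
    (Sum.elim (fun _ => ((Real.sqrt (8 * ((n : ℝ) - 1) * (n : ℝ) ^ 2) : ℂ))⁻¹ * (((n : ℂ) - 1) * I))
      (fun _ => ((Real.sqrt (8 * ((n : ℝ) - 1) * (n : ℝ) ^ 2) : ℂ))⁻¹ * (-I)))

lemma emat_eq (n : ℕ) : emat n = diagonal (dfun n) := by
  have h : Emat n = diagonal (fun k => ((Real.sqrt (8 * ((n : ℝ) - 1) * (n : ℝ) ^ 2) : ℂ))⁻¹ *
      Sum.elim (fun _ => ((n : ℂ) - 1) * I) (fun _ => -I) k) := by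
    rw [Emat, ← diagonal_smul]; rfl
  rw [emat, h, Matrix.fromBlocks_diagonal]
  ext (k | k) <;> rcases k with k | k <;> rfl

lemma adE_apply (n : ℕ) (X : Matrix (Idx n) (Idx n) ℂ) (i j : Idx n) :
    adE n X i j = (dfun n i - dfun n j) * X i j := by
  rw [adE, emat_eq]
  rw [Matrix.sub_apply, Matrix.diagonal_mul, Matrix.mul_diagonal]
  ring

/-- ad(e)² = −(1/ρ)·id on m_⊥, where ρ = 8(n−1):
[e,[e, μ(a,b)]] = −(1/ρ) μ(a,b). -/
theorem stmt8 (n : ℕ) (hn : 2 ≤ n) (a b : Fin (n - 1) → ℂ) :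
    adE n (adE n (mu n a b)) = (-((((8 * ((n : ℝ) - 1) : ℝ) : ℂ))⁻¹)) • mu n a b := by

  have hnn : (0:ℝ) ≤ 8 * ((n : ℝ) - 1) * (n : ℝ) ^ 2 := by
    have : (2:ℝ) ≤ n := by exact_mod_cast hn
    nlinarith
  have hs2 : ((Real.sqrt (8 * ((n : ℝ) - 1) * (n : ℝ) ^ 2) : ℂ)) ^ 2
      = 8 * ((n : ℂ) - 1) * (n : ℂ) ^ 2 := by
    rw [← Complex.ofReal_pow, Real.sq_sqrt hnn]
    push_cast
    ring
  have hne : ((n : ℂ) - 1) ≠ 0 := by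
    intro h
    have : (n : ℂ) = 1 := by linear_combination h
    have : (n : ℕ) = 1 := by exact_mod_cast this
    omega
  have hn0 : (n : ℂ) ≠ 0 := by
    intro h
    have : (n : ℕ) = 0 := by exact_mod_cast h
    omega
  have hs2ne : (8 : ℂ) * ((n : ℂ) - 1) * (n : ℂ) ^ 2 ≠ 0 :=
    mul_ne_zero (mul_ne_zero (by norm_num) hne) (pow_ne_zero 2 hn0)
  have hsne : ((Real.sqrt (8 * ((n : ℝ) - 1) * (n : ℝ) ^ 2) : ℂ)) ≠ 0 := by
    intro h
    rw [h] at hs2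
    exact hs2ne (by rw [← hs2]; ring)
  set s : ℂ := ((Real.sqrt (8 * ((n : ℝ) - 1) * (n : ℝ) ^ 2) : ℂ)) with hsdef
  -- key scalar identity
  have key : ∀ z : ℂ, (s⁻¹ * (((n : ℂ) - 1) * I) - s⁻¹ * (-I)) *
      ((s⁻¹ * (((n : ℂ) - 1) * I) - s⁻¹ * (-I)) * z)
      = (-(((8 * ((n : ℝ) - 1) : ℝ) : ℂ))⁻¹) * z := by
    intro z
    have h8 : (((8 * ((n : ℝ) - 1) : ℝ) : ℂ)) = 8 * ((n : ℂ) - 1) := by push_cast; ring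
    rw [h8]
    have h8ne : (8 : ℂ) * ((n : ℂ) - 1) ≠ 0 := mul_ne_zero (by norm_num) hne
    have e1 : (s⁻¹ * (((n : ℂ) - 1) * I) - s⁻¹ * (-I)) *
        ((s⁻¹ * (((n : ℂ) - 1) * I) - s⁻¹ * (-I)) * z)
        = (s ^ 2)⁻¹ * ((n : ℂ) ^ 2 * (I ^ 2 * z)) := by
      field_simp
      ring
    rw [e1, hs2, I_sq]
    field_simp
  have key' : ∀ z : ℂ, (s⁻¹ * (-I) - s⁻¹ * (((n : ℂ) - 1) * I)) *
      ((s⁻¹ * (-I) - s⁻¹ * (((n : ℂ) - 1) * I)) * z)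
      = (-(((8 * ((n : ℝ) - 1) : ℝ) : ℂ))⁻¹) * z := by
    intro z
    have := key z
    linear_combination this
  ext i j
  rw [adE_apply, adE_apply, Matrix.smul_apply, smul_eq_mul]
  rcases i with (i | i) | (i | i) <;> rcases j with (j | j) | (j | j) <;>
    simp only [mu, Arow, Brow, mconj, dfun, Sum.elim_inl, Sum.elim_inr,
      Matrix.fromBlocks_apply₁₁, Matrix.fromBlocks_apply₁₂, Matrix.fromBlocks_apply₂₁,
      Matrix.fromBlocks_apply₂₂, Matrix.map_apply, Matrix.neg_apply, Matrix.zero_apply,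
      Matrix.of_apply, map_neg, map_zero, mul_zero, neg_zero, sub_self, zero_mul] <;>
    first
      | exact key _
      | exact key' _
end
end

section
/- Let n ≥ 2. For all row vectors a₁, b₁, a₂, b₂ ∈ ℂ^{n−1}: tr(μ(a₁,b₁) μ(a₂,b₂)) = −2(A(a₁,a₂) + A(b₁,b₂)), where A(x,y) = x ȳᵀ + y x̄ᵀ. Consequently the Cartan–Killing form on m_⊥ is ⟨μ(a₁,b₁), μ(a₂,b₂)⟩ = −8n(A(a₁,a₂) + A(b₁,b₂)). -/
open Matrix Complex

noncomputable section

/-- the Hermitian pairing A(x,y) = x ȳᵀ + y x̄ᵀ -/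
def Aform {m : ℕ} (x y : Fin m → ℂ) : ℂ :=
  ∑ i, (x i * star (y i) + y i * star (x i))

/-- tr(μ(a₁,b₁) μ(a₂,b₂)) = −2(A(a₁,a₂) + A(b₁,b₂)), and hence the
Cartan–Killing form ⟨X,Y⟩ = 4n tr(XY) on m_⊥ is
⟨μ(a₁,b₁), μ(a₂,b₂)⟩ = −8n(A(a₁,a₂) + A(b₁,b₂)). -/
theorem stmt9 (n : ℕ) (hn : 2 ≤ n) (a₁ b₁ a₂ b₂ : Fin (n - 1) → ℂ) :
    (mu n a₁ b₁ * mu n a₂ b₂).trace = -2 * (Aform a₁ a₂ + Aform b₁ b₂) ∧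
    (4 * (n : ℂ)) * (mu n a₁ b₁ * mu n a₂ b₂).trace
      = -(8 * (n : ℂ)) * (Aform a₁ a₂ + Aform b₁ b₂) := by
  have h1 : (mu n a₁ b₁ * mu n a₂ b₂).trace = -2 * (Aform a₁ a₂ + Aform b₁ b₂) := by
    simp only [Matrix.trace, Matrix.diag, Matrix.mul_apply, mu, Arow, Brow, mconj, Aform,
      Matrix.fromBlocks, Matrix.map_apply, Fintype.sum_sum_type, Sum.elim_inl, Sum.elim_inr,
      Matrix.of_apply, Matrix.neg_apply, Matrix.zero_apply, Fin.sum_univ_one,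
      map_neg, _root_.map_mul, RingHom.map_zero, mul_zero, zero_mul, neg_mul, mul_neg, neg_neg,
      add_zero, zero_add, Finset.sum_add_distrib, Finset.sum_neg_distrib]
    push_cast
    simp only [Complex.star_def, Complex.conj_conj]
    ring_nf
    simp only [Finset.sum_const_zero, zero_mul]
    have comm : ∀ (u v : Fin (n-1) → ℂ), ∑ x, (starRingEnd ℂ) (u x) * v x
        = ∑ x, v x * (starRingEnd ℂ) (u x) :=
      fun u v => Finset.sum_congr rfl fun x _ => mul_comm _ _
    rw [comm a₁ a₂, comm b₁ b₂]
    ring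
  exact ⟨h1, by rw [h1]; ring⟩
end
end

section
/- Let n ≥ 1 and χ = 8(n+2). Suppose u₁, h¹ : ℝ → iℝ, u₂, h² : ℝ → ℂ, 𝐮₁, 𝐮₂, 𝐡¹, 𝐡² : ℝ → ℂ^{n−1} (row-vector valued), and p : ℝ → ℝ are continuously differentiable and satisfy: (h¹)′ = −C(𝐮₁,𝐡¹) − C(𝐮₂,𝐡²) − (4/√χ) p u₁; (h²)′ = −S(𝐮₂,𝐡¹) + S(𝐮₁,𝐡²) − (4/√χ) p u₂; −(𝐡¹)′ = ½h¹𝐮₁ + u₁𝐡¹ − ½h²𝐮̄₂ − u₂𝐡̄² + (1/√χ) p 𝐮₁; −(𝐡²)′ = ½h¹𝐮₂ + u₂𝐡̄¹ + ½h²𝐮̄₁ + u₁𝐡² + (1/√χ) p 𝐮₂; (1/√χ) p′ = ½(A(h¹,u₁) + A(𝐡¹,𝐮₁) + A(h²,u₂) + A(𝐡²,𝐮₂)). Then the function (1/χ)p² + ¼|h¹|² + ¼|h²|² + |𝐡¹|² + |𝐡²|² is constant in x, where |z|² denotes the squared modulus for scalars and |𝐡|² = 𝐡𝐡̄ᵀ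 for row vectors. -/
open Matrix Complex

noncomputable section

/-- entrywise complex conjugate of a row vector -/
def conjv {ι : Type*} (x : ι → ℂ) : ι → ℂ := fun i => star (x i)

/-- the pairing A(x,y) = x ȳᵀ + y x̄ᵀ for row vectors -/
def Af {m : ℕ} (x y : Fin m → ℂ) : ℂ := ∑ i, (x i * star (y i) + y i * star (x i))

/-- the pairing C(x,y) = x ȳᵀ − y x̄ᵀ for row vectors -/
def Cf {m : ℕ} (x y : Fin m → ℂ) : ℂ := ∑ i, (x i * star (y i) - y i * star (x i))

/-- the pairing S(x,y) = x yᵀ + y xᵀ for row vectors -/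
def Sf {m : ℕ} (x y : Fin m → ℂ) : ℂ := ∑ i, (x i * y i + y i * x i)

/-- the pairing A(x,y) = x ȳ + y x̄ for scalars -/
def Afs (x y : ℂ) : ℂ := x * star y + y * star x

open ComplexConjugate in
private lemma conj_Cf' {m : ℕ} (a b : Fin m → ℂ) : conj (Cf a b) = -(Cf a b) := by
  unfold Cf
  rw [map_sum, ← Finset.sum_neg_distrib]
  refine Finset.sum_congr rfl fun i _ => ?_
  simp only [Complex.star_def, map_sub, _root_.map_mul, Complex.conj_conj]
  ring

open ComplexConjugate in
private lemma conj_Sf' {m : ℕ} (a b : Fin m → ℂ) : conj (Sf a b) = Sf (conjv a) (conjv b) := by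
  unfold Sf conjv
  rw [map_sum]
  refine Finset.sum_congr rfl fun i _ => ?_
  simp only [Complex.star_def, map_add, _root_.map_mul]

set_option maxHeartbeats 2000000 in
open ComplexConjugate in
/-- for solutions of the −1 (SG) flow system on
Sp(n+1)/Sp(1)×Sp(n), with χ = 8(n+2), the quantity
(1/χ)p² + ¼|h¹|² + ¼|h²|² + |𝐡¹|² + |𝐡²|² is constant in x. -/
theorem stmt19 (n : ℕ) (hn : 1 ≤ n)
    (u₁ h1 : ℝ → ℂ) (u₂ h2 : ℝ → ℂ)
    (v₁ v₂ g1 g2 : ℝ → Fin (n - 1) → ℂ) (p : ℝ → ℝ)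
    (hu₁im : ∀ x, (u₁ x).re = 0) (hh1im : ∀ x, (h1 x).re = 0)
    (hu₁ : ContDiff ℝ 1 u₁) (hu₂ : ContDiff ℝ 1 u₂)
    (hh1 : ContDiff ℝ 1 h1) (hh2 : ContDiff ℝ 1 h2)
    (hv₁ : ContDiff ℝ 1 v₁) (hv₂ : ContDiff ℝ 1 v₂)
    (hg1 : ContDiff ℝ 1 g1) (hg2 : ContDiff ℝ 1 g2)
    (hp : ContDiff ℝ 1 p)
    (heq1 : ∀ x : ℝ,
      deriv h1 x = -(Cf (v₁ x) (g1 x)) - Cf (v₂ x) (g2 x)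
        - (4 / ((Real.sqrt (8 * ((n : ℝ) + 2)) : ℂ))) * (p x : ℂ) * u₁ x)
    (heq2 : ∀ x : ℝ,
      deriv h2 x = -(Sf (v₂ x) (g1 x)) + Sf (v₁ x) (g2 x)
        - (4 / ((Real.sqrt (8 * ((n : ℝ) + 2)) : ℂ))) * (p x : ℂ) * u₂ x)
    (heq3 : ∀ x : ℝ,
      -(deriv g1 x) = (h1 x / 2) • v₁ x + u₁ x • g1 x
        - (h2 x / 2) • conjv (v₂ x) - u₂ x • conjv (g2 x)
        + ((p x : ℂ) / ((Real.sqrt (8 * ((n : ℝ) + 2)) : ℂ))) • v₁ x)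
    (heq4 : ∀ x : ℝ,
      -(deriv g2 x) = (h1 x / 2) • v₂ x + u₂ x • conjv (g1 x)
        + (h2 x / 2) • conjv (v₁ x) + u₁ x • g2 x
        + ((p x : ℂ) / ((Real.sqrt (8 * ((n : ℝ) + 2)) : ℂ))) • v₂ x)
    (heq5 : ∀ x : ℝ,
      (((Real.sqrt (8 * ((n : ℝ) + 2)))⁻¹ * deriv p x : ℝ) : ℂ)
        = (Afs (h1 x) (u₁ x) + Af (g1 x) (v₁ x)
            + Afs (h2 x) (u₂ x) + Af (g2 x) (v₂ x)) / 2) :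
    ∀ x y : ℝ,
      (8 * ((n : ℝ) + 2))⁻¹ * (p x) ^ 2
        + (1 / 4) * Complex.normSq (h1 x) + (1 / 4) * Complex.normSq (h2 x)
        + (∑ i, Complex.normSq (g1 x i)) + (∑ i, Complex.normSq (g2 x i))
      = (8 * ((n : ℝ) + 2))⁻¹ * (p y) ^ 2
        + (1 / 4) * Complex.normSq (h1 y) + (1 / 4) * Complex.normSq (h2 y)
        + (∑ i, Complex.normSq (g1 y i)) + (∑ i, Complex.normSq (g2 y i)) := by
  intro x y
  have h8 : (0:ℝ) < 8 * ((n:ℝ) + 2) := by positivity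
  have hSpos : (0:ℝ) < Real.sqrt (8 * ((n:ℝ) + 2)) := Real.sqrt_pos.mpr h8
  have key : ∀ w : ℝ, HasDerivAt (fun t => (((8 * ((n:ℝ) + 2))⁻¹ : ℝ) : ℂ) * ((p t : ℂ) * (p t : ℂ))
      + (1/4 : ℂ) * (h1 t * star (h1 t)) + (1/4 : ℂ) * (h2 t * star (h2 t))
      + (∑ i, g1 t i * star (g1 t i)) + (∑ i, g2 t i * star (g2 t i))) 0 w := by
    intro w
    have Hp : HasDerivAt (fun t => ((p t : ℝ) : ℂ)) ((deriv p w : ℝ) : ℂ) w :=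
      (((hp.differentiable one_ne_zero) w).hasDerivAt).ofReal_comp
    have H1 : HasDerivAt h1 (deriv h1 w) w := ((hh1.differentiable one_ne_zero) w).hasDerivAt
    have H2 : HasDerivAt h2 (deriv h2 w) w := ((hh2.differentiable one_ne_zero) w).hasDerivAt
    have Hg1 : ∀ i, HasDerivAt (fun t => g1 t i) (deriv g1 w i) w := fun i =>
      ((ContinuousLinearMap.proj (R := ℝ) (φ := fun _ : Fin (n-1) => ℂ) i).hasFDerivAt.comp_hasDerivAt
        w ((hg1.differentiable one_ne_zero) w).hasDerivAt :)
    have Hg2 : ∀ i, HasDerivAt (fun t => g2 t i) (deriv g2 w i) w := fun i =>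
      ((ContinuousLinearMap.proj (R := ℝ) (φ := fun _ : Fin (n-1) => ℂ) i).hasFDerivAt.comp_hasDerivAt
        w ((hg2.differentiable one_ne_zero) w).hasDerivAt :)
    have HF : HasDerivAt (fun t => (((8 * ((n:ℝ) + 2))⁻¹ : ℝ) : ℂ) * ((p t : ℂ) * (p t : ℂ))
        + (1/4 : ℂ) * (h1 t * star (h1 t)) + (1/4 : ℂ) * (h2 t * star (h2 t))
        + (∑ i, g1 t i * star (g1 t i)) + (∑ i, g2 t i * star (g2 t i)))
        ((((8 * ((n:ℝ) + 2))⁻¹ : ℝ) : ℂ) * (((deriv p w : ℝ) : ℂ) * (p w : ℂ) + (p w : ℂ) * ((deriv p w : ℝ) : ℂ))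
          + (1/4 : ℂ) * (deriv h1 w * star (h1 w) + h1 w * star (deriv h1 w))
          + (1/4 : ℂ) * (deriv h2 w * star (h2 w) + h2 w * star (deriv h2 w))
          + (∑ i, (deriv g1 w i * star (g1 w i) + g1 w i * star (deriv g1 w i)))
          + (∑ i, (deriv g2 w i * star (g2 w i) + g2 w i * star (deriv g2 w i)))) w := by
      have HF0 := ((((((Hp.mul Hp)).const_mul ((((8 * ((n:ℝ) + 2))⁻¹ : ℝ) : ℂ))).add
        ((H1.mul H1.star).const_mul (1/4 : ℂ))).add
        ((H2.mul H2.star).const_mul (1/4 : ℂ))).add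
        (HasDerivAt.sum (u := Finset.univ) (A := fun i t => g1 t i * star (g1 t i))
          (A' := fun i => deriv g1 w i * star (g1 w i) + g1 w i * star (deriv g1 w i))
          (fun i _ => (Hg1 i).mul (Hg1 i).star))).add
        (HasDerivAt.sum (u := Finset.univ) (A := fun i t => g2 t i * star (g2 t i))
          (A' := fun i => deriv g2 w i * star (g2 w i) + g2 w i * star (deriv g2 w i))
          (fun i _ => (Hg2 i).mul (Hg2 i).star))
      exact HF0.congr_of_eventuallyEq (Filter.Eventually.of_forall fun t => by
        simp [Finset.sum_apply])
    -- facts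
    have hch1 : conj (h1 w) = -h1 w := by apply Complex.ext <;> simp [hh1im w]
    have hcu1 : conj (u₁ w) = -u₁ w := by apply Complex.ext <;> simp [hu₁im w]
    have hg1d : ∀ i, deriv g1 w i = -((h1 w / 2) * v₁ w i + u₁ w * g1 w i
        - (h2 w / 2) * conj (v₂ w i) - u₂ w * conj (g2 w i)
        + ((p w : ℂ) / ((Real.sqrt (8 * ((n : ℝ) + 2)) : ℂ))) * v₁ w i) := fun i => by
      have h := congrFun (heq3 w) i
      simp only [Pi.neg_apply, Pi.add_apply, Pi.sub_apply, Pi.smul_apply, smul_eq_mul,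
        conjv, Complex.star_def] at h
      exact neg_eq_iff_eq_neg.mp h
    have hg2d : ∀ i, deriv g2 w i = -((h1 w / 2) * v₂ w i + u₂ w * conj (g1 w i)
        + (h2 w / 2) * conj (v₁ w i) + u₁ w * g2 w i
        + ((p w : ℂ) / ((Real.sqrt (8 * ((n : ℝ) + 2)) : ℂ))) * v₂ w i) := fun i => by
      have h := congrFun (heq4 w) i
      simp only [Pi.neg_apply, Pi.add_apply, Pi.sub_apply, Pi.smul_apply, smul_eq_mul,
        conjv, Complex.star_def] at h
      exact neg_eq_iff_eq_neg.mp h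
    have hG1 : ∑ i, (deriv g1 w i * conj (g1 w i) + g1 w i * conj (deriv g1 w i))
        = -(h1 w / 2) * Cf (v₁ w) (g1 w)
          + (h2 w / 4) * Sf (conjv (v₂ w)) (conjv (g1 w))
          + (conj (h2 w) / 4) * Sf (v₂ w) (g1 w)
          + u₂ w * (∑ i, conj (g1 w i) * conj (g2 w i))
          + conj (u₂ w) * (∑ i, g1 w i * g2 w i)
          - ((p w : ℂ) / ((Real.sqrt (8 * ((n : ℝ) + 2)) : ℂ))) * Af (g1 w) (v₁ w) := by
      simp only [Cf, Sf, Af, conjv, Complex.star_def, Finset.mul_sum,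
        ← Finset.sum_add_distrib, ← Finset.sum_sub_distrib]
      refine Finset.sum_congr rfl fun i _ => ?_
      rw [hg1d i]
      simp only [map_neg, map_add, map_sub, _root_.map_mul, map_div₀, Complex.conj_ofReal,
        Complex.conj_conj, hch1, hcu1, map_ofNat]
      ring
    have hG2 : ∑ i, (deriv g2 w i * conj (g2 w i) + g2 w i * conj (deriv g2 w i))
        = -(h1 w / 2) * Cf (v₂ w) (g2 w)
          - (h2 w / 4) * Sf (conjv (v₁ w)) (conjv (g2 w))
          - (conj (h2 w) / 4) * Sf (v₁ w) (g2 w)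
          - u₂ w * (∑ i, conj (g1 w i) * conj (g2 w i))
          - conj (u₂ w) * (∑ i, g1 w i * g2 w i)
          - ((p w : ℂ) / ((Real.sqrt (8 * ((n : ℝ) + 2)) : ℂ))) * Af (g2 w) (v₂ w) := by
      simp only [Cf, Sf, Af, conjv, Complex.star_def, Finset.mul_sum,
        ← Finset.sum_add_distrib, ← Finset.sum_sub_distrib]
      refine Finset.sum_congr rfl fun i _ => ?_
      rw [hg2d i]
      simp only [map_neg, map_add, map_sub, _root_.map_mul, map_div₀, Complex.conj_ofReal,
        Complex.conj_conj, hch1, hcu1, map_ofNat]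
      ring
    have h5 : ((Real.sqrt (8 * ((n:ℝ)+2)) : ℝ) : ℂ)⁻¹ * ((deriv p w : ℝ) : ℂ)
        = (Afs (h1 w) (u₁ w) + Af (g1 w) (v₁ w) + Afs (h2 w) (u₂ w) + Af (g2 w) (v₂ w)) / 2 := by
      have h := heq5 w
      push_cast at h
      exact h
    have hc : (((8 * ((n:ℝ) + 2))⁻¹ : ℝ) : ℂ)
        = ((Real.sqrt (8 * ((n:ℝ)+2)) : ℝ) : ℂ)⁻¹ * ((Real.sqrt (8 * ((n:ℝ)+2)) : ℝ) : ℂ)⁻¹ := by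
      rw [← mul_inv, show ((Real.sqrt (8*((n:ℝ)+2)) : ℝ) : ℂ) * ((Real.sqrt (8*((n:ℝ)+2)) : ℝ) : ℂ)
          = ((8*((n:ℝ)+2) : ℝ) : ℂ) from by exact_mod_cast Real.mul_self_sqrt h8.le,
        Complex.ofReal_inv]
    have HPP : (((8 * ((n:ℝ) + 2))⁻¹ : ℝ) : ℂ) * ((deriv p w : ℝ) : ℂ)
        = ((Real.sqrt (8 * ((n:ℝ)+2)) : ℝ) : ℂ)⁻¹ *
          ((Afs (h1 w) (u₁ w) + Af (g1 w) (v₁ w) + Afs (h2 w) (u₂ w) + Af (g2 w) (v₂ w)) / 2) := by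
      rw [hc, mul_assoc, h5]
    simp only [Afs, Complex.star_def, hch1, hcu1] at HPP
    convert HF using 1
    simp only [Complex.star_def]
    rw [hG1, hG2, heq1 w, heq2 w]
    simp only [map_add, map_sub, map_neg, _root_.map_mul, map_div₀, Complex.conj_ofReal,
      conj_Cf', conj_Sf', hch1, hcu1, map_ofNat]
    linear_combination (-(2 * ((p w : ℝ) : ℂ))) * HPP
  -- conclude constancy
  have hdiff : Differentiable ℝ (fun t => (((8 * ((n:ℝ) + 2))⁻¹ : ℝ) : ℂ) * ((p t : ℂ) * (p t : ℂ))
      + (1/4 : ℂ) * (h1 t * star (h1 t)) + (1/4 : ℂ) * (h2 t * star (h2 t))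
      + (∑ i, g1 t i * star (g1 t i)) + (∑ i, g2 t i * star (g2 t i))) :=
    fun w => (key w).differentiableAt
  have hcon := is_const_of_deriv_eq_zero hdiff (fun w => (key w).deriv) x y
  have hcast : ∀ t : ℝ, (((8 * ((n:ℝ) + 2))⁻¹ : ℝ) : ℂ) * ((p t : ℂ) * (p t : ℂ))
      + (1/4 : ℂ) * (h1 t * star (h1 t)) + (1/4 : ℂ) * (h2 t * star (h2 t))
      + (∑ i, g1 t i * star (g1 t i)) + (∑ i, g2 t i * star (g2 t i))
      = (((8 * ((n : ℝ) + 2))⁻¹ * (p t) ^ 2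
        + (1 / 4) * Complex.normSq (h1 t) + (1 / 4) * Complex.normSq (h2 t)
        + (∑ i, Complex.normSq (g1 t i)) + (∑ i, Complex.normSq (g2 t i)) : ℝ) : ℂ) := by
    intro t
    simp only [Complex.star_def, Complex.mul_conj]
    push_cast
    ring
  rw [hcast x, hcast y] at hcon
  exact_mod_cast hcon

end
end
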